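/- Let P : R^d → R be continuous and positive definite, and suppose Exp(P) contains an endomorphism E whose spectrum is real. Then the group r^E is contracting, and hence P is positive homogeneous. -/

import Mathlib

/-!
Every eigenvalue `μ` of an exponent `E` is positive: for an eigenvector `v`,
`P (r ^ μ • v) = r * P v` is unbounded as `r → ∞`, while for `μ ≤ 0` the points `r ^ μ • v` stay
on the segment `[0, v]`. As the characteristic polynomial splits, `ℝ^d` is the sum of the
generalized eigenspaces of `E`, on which `r^E x = r ^ μ • (polynomial in log r)` tends to `0` as
`r → 0⁺`; hence `‖r^E‖ → 0`. Contraction in turn bounds the sublevel sets of `P`: the orbit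
`r ↦ r^E x` of a point outside the unit ball meets the unit sphere, where `P ≥ m > 0`, so
`{P < m}` lies in the unit ball, and `{P < N}` is the image of `{P < m}` under a single `r^E`.
-/

open MeasureTheory Filter Set

/-- The continuous one-parameter group `T_r = r^E = exp((ln r) E)` generated by an
endomorphism `E` of `ℝ^d`. -/
noncomputable def Tgrp {d : ℕ} (E : EuclideanSpace ℝ (Fin d) →L[ℝ] EuclideanSpace ℝ (Fin d))
    (r : ℝ) : EuclideanSpace ℝ (Fin d) →L[ℝ] EuclideanSpace ℝ (Fin d) :=
  NormedSpace.exp (Real.log r • E)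

/-- The group `{T_r}` is contracting: `‖T_r‖ → 0` as `r → 0⁺` (operator norm). -/
def IsContracting {d : ℕ} (E : EuclideanSpace ℝ (Fin d) →L[ℝ] EuclideanSpace ℝ (Fin d)) : Prop :=
  Tendsto (fun r : ℝ => ‖Tgrp E r‖) (nhdsWithin 0 (Set.Ioi 0)) (nhds 0)


/-- `E` is an exponent of `P`: `P(r^E x) = r · P(x)` for all `r > 0` and `x ∈ ℝ^d`. -/
def IsExpOf {d : ℕ} (P : EuclideanSpace ℝ (Fin d) → ℝ)
    (E : EuclideanSpace ℝ (Fin d) →L[ℝ] EuclideanSpace ℝ (Fin d)) : Prop :=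
  ∀ r : ℝ, 0 < r → ∀ x : EuclideanSpace ℝ (Fin d), P (Tgrp E r x) = r * P x

/-- `P` is positive homogeneous: continuous, positive definite, possesses an exponent,
and `P(x) → ∞` as `|x| → ∞`. -/
def IsPosHom {d : ℕ} (P : EuclideanSpace ℝ (Fin d) → ℝ) : Prop :=
  Continuous P ∧ (∀ x, 0 ≤ P x) ∧ (∀ x, P x = 0 → x = 0) ∧ (∃ E, IsExpOf P E) ∧
    Tendsto P (Filter.cocompact (EuclideanSpace ℝ (Fin d))) Filter.atTop

open Topology
open scoped Nat

namespace Module.End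

open Polynomial Function

theorem ker_aeval_prod_eq_iSup_of_pairwise_isCoprime {R M ι : Type*} [CommRing R] [AddCommGroup M]
    [Module R M] (f : End R M) (s : Finset ι) (p : ι → R[X])
    (hp : (s : Set ι).Pairwise (IsCoprime on p)) :
    LinearMap.ker (aeval f (∏ i ∈ s, p i)) = ⨆ i ∈ s, LinearMap.ker (aeval f (p i)) := by
  classical
  induction s using Finset.induction_on with
  | empty => simp [Module.End.one_eq_id]
  | insert a s ha ih =>
    have hcop : IsCoprime (p a) (∏ i ∈ s, p i) := IsCoprime.prod_right fun i hi =>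
      hp (s.mem_insert_self a) (Finset.mem_insert_of_mem hi) (ne_of_mem_of_not_mem hi ha).symm
    rw [Finset.prod_insert ha, ← sup_ker_aeval_eq_ker_aeval_mul_of_coprime f hcop,
      ih (hp.mono (by simp)), Finset.iSup_insert]

theorem ker_aeval_X_sub_C_pow {R M : Type*} [CommRing R] [AddCommGroup M] [Module R M]
    (f : End R M) (μ : R) (k : ℕ) :
    LinearMap.ker (aeval f ((X - C μ) ^ k)) = f.genEigenspace μ k := by
  rw [genEigenspace_nat, map_pow, map_sub, aeval_X, aeval_C, Algebra.algebraMap_eq_smul_one]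

theorem iSup_maxGenEigenspace_eq_top_of_splits {K V : Type*} [Field K] [AddCommGroup V]
    [Module K V] [FiniteDimensional K V] (f : End K V) (h : f.charpoly.Splits) :
    ⨆ μ, f.maxGenEigenspace μ = ⊤ := by
  classical
  set s := f.charpoly.roots
  have hχ : f.charpoly = ∏ μ ∈ s.toFinset, (X - C μ) ^ s.count μ := by
    rw [← Finset.prod_multiset_map_count]
    exact h.eq_prod_roots_of_monic f.charpoly_monic
  have hcop : (s.toFinset : Set K).Pairwise (IsCoprime on fun μ => (X - C μ) ^ s.count μ) :=
    fun a _ b _ hab => (isCoprime_X_sub_C_of_isUnit_sub (sub_ne_zero.2 hab).isUnit).pow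
  refine eq_top_iff.2 ?_
  calc ⊤ = LinearMap.ker (aeval f f.charpoly) := by
        rw [LinearMap.aeval_self_charpoly, LinearMap.ker_zero]
    _ = ⨆ μ ∈ s.toFinset, f.genEigenspace μ (s.count μ) := by
      simp_rw [← ker_aeval_X_sub_C_pow]
      rw [← ker_aeval_prod_eq_iSup_of_pairwise_isCoprime f _ _ hcop, ← hχ]
    _ ≤ ⨆ μ, f.maxGenEigenspace μ :=
      iSup₂_le fun μ _ => (f.genEigenspace_le_maximal μ _).trans (le_iSup _ μ)

theorem hasEigenvalue_of_mem_maxGenEigenspace {R M : Type*} [CommRing R] [AddCommGroup M]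
    [Module R M] {f : End R M} {μ : R} {x : M} (hx : x ∈ f.maxGenEigenspace μ) (hx0 : x ≠ 0) :
    f.HasEigenvalue μ := by
  obtain ⟨k, hk⟩ := (f.mem_maxGenEigenspace μ x).1 hx
  exact hasEigenvalue_of_hasGenEigenvalue (k := k)
    ((Submodule.ne_bot_iff _).2 ⟨x, mem_genEigenspace_nat.2 hk, hx0⟩)

end Module.End

section Exponential

variable {V : Type*} [NormedAddCommGroup V] [NormedSpace ℝ V] [CompleteSpace V]

theorem NormedSpace.exp_apply_eq_sum_of_pow_apply_eq_zero {N : V →L[ℝ] V} {m : ℕ} {x : V}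
    (h : (N ^ m) x = 0) :
    NormedSpace.exp N x = ∑ k ∈ Finset.range m, (k ! : ℝ)⁻¹ • (N ^ k) x := by
  calc NormedSpace.exp N x = ∑' k, (k ! : ℝ)⁻¹ • (N ^ k) x := by
        rw [NormedSpace.exp_eq_tsum ℝ]
        exact (ContinuousLinearMap.apply ℝ V x).map_tsum (NormedSpace.expSeries_summable' N)
    _ = _ := by
      refine tsum_eq_sum fun k hk => ?_
      obtain ⟨j, rfl⟩ := Nat.exists_eq_add_of_le' (not_lt.1 (Finset.mem_range.not.1 hk))
      rw [pow_add, mul_apply_eq_comp, h, map_zero, smul_zero]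

theorem NormedSpace.exp_smul_apply_of_pow_sub_smul_apply_eq_zero (A : V →L[ℝ] V) (s μ : ℝ)
    {m : ℕ} {x : V} (h : ((A - μ • 1) ^ m) x = 0) :
    NormedSpace.exp (s • A) x =
      Real.exp (s * μ) • ∑ k ∈ Finset.range m, (s ^ k / k !) • ((A - μ • 1) ^ k) x := by
  let +nondep : NormedAlgebra ℚ (V →L[ℝ] V) := .restrictScalars ℚ ℝ _
  have hsplit : s • A = algebraMap ℝ (V →L[ℝ] V) (s * μ) + s • (A - μ • 1) := by
    rw [Algebra.algebraMap_eq_smul_one]; module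
  have hnil : ((s • (A - μ • 1)) ^ m) x = 0 := by
    rw [smul_pow, smul_apply, h, smul_zero]
  rw [hsplit, NormedSpace.exp_add_of_commute (Algebra.commute_algebraMap_left _ _),
    ← NormedSpace.algebraMap_exp_comm, ← Real.exp_eq_exp_ℝ, mul_apply_eq_comp,
    NormedSpace.exp_apply_eq_sum_of_pow_apply_eq_zero hnil, Algebra.algebraMap_eq_smul_one,
    smul_apply, one_apply_eq_self]
  simp only [smul_pow, smul_apply, smul_smul, div_eq_inv_mul]

theorem NormedSpace.exp_smul_apply_of_apply_eq_smul (A : V →L[ℝ] V) (s : ℝ) {μ : ℝ} {v : V}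
    (h : A v = μ • v) : NormedSpace.exp (s • A) v = Real.exp (s * μ) • v := by
  have h1 : ((A - μ • (1 : V →L[ℝ] V)) ^ 1) v = 0 := by
    rw [pow_one, sub_apply, smul_apply, one_apply_eq_self, h, sub_self]
  simpa using NormedSpace.exp_smul_apply_of_pow_sub_smul_apply_eq_zero A s μ h1

theorem NormedSpace.exp_add_smul (A : V →L[ℝ] V) (s t : ℝ) :
    NormedSpace.exp ((s + t) • A) = NormedSpace.exp (s • A) * NormedSpace.exp (t • A) := by
  let +nondep : NormedAlgebra ℚ (V →L[ℝ] V) := .restrictScalars ℚ ℝ _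
  rw [add_smul, NormedSpace.exp_add_of_commute (((Commute.refl A).smul_left s).smul_right t)]

theorem NormedSpace.tendsto_exp_neg_smul_apply_of_pow_sub_smul_apply_eq_zero (A : V →L[ℝ] V)
    {μ : ℝ} (hμ : 0 < μ) {m : ℕ} {x : V} (h : ((A - μ • 1) ^ m) x = 0) :
    Tendsto (fun t : ℝ => NormedSpace.exp ((-t) • A) x) atTop (𝓝 0) := by
  simp_rw [NormedSpace.exp_smul_apply_of_pow_sub_smul_apply_eq_zero A _ μ h, Finset.smul_sum,
    smul_smul]
  rw [← Finset.sum_const_zero (s := Finset.range m)]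
  refine tendsto_finsetSum _ fun k _ => ?_
  rw [← zero_smul ℝ (((A - μ • 1) ^ k) x)]
  refine Tendsto.smul_const ?_ _
  have hlim := ((Real.tendsto_pow_mul_exp_neg_atTop_nhds_zero k).comp
    (tendsto_id.const_mul_atTop hμ)).const_mul ((-1) ^ k / (μ ^ k * k !))
  rw [mul_zero] at hlim
  refine hlim.congr fun t => ?_
  have : μ ^ k ≠ 0 := pow_ne_zero _ hμ.ne'
  simp only [Function.comp_apply, id]
  field_simp
  ring

end Exponential

theorem ContinuousLinearMap.tendsto_of_tendsto_apply {𝕜 E F α : Type*}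
    [NontriviallyNormedField 𝕜] [CompleteSpace 𝕜] [NormedAddCommGroup E] [NormedSpace 𝕜 E]
    [FiniteDimensional 𝕜 E] [NormedAddCommGroup F] [NormedSpace 𝕜 F]
    {f : α → E →L[𝕜] F} {l : Filter α} {g : E →L[𝕜] F}
    (h : ∀ x, Tendsto (fun a => f a x) l (𝓝 (g x))) : Tendsto f l (𝓝 g) := by
  let e : (E →L[𝕜] F) ≃L[𝕜] Fin (Module.finrank 𝕜 E) → F :=
    ((ContinuousLinearEquiv.ofFinrankEq (Module.finrank_fin_fun 𝕜).symm).arrowCongr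
      (1 : F ≃L[𝕜] F)).trans (ContinuousLinearEquiv.piRing _)
  rw [e.toHomeomorph.isInducing.tendsto_nhds_iff]
  exact tendsto_pi_nhds.2 fun i => h _

local notation:max "ℝ^" d:max => EuclideanSpace ℝ (Fin d)

section Tgrp

variable {d : ℕ}

theorem Tgrp_one (E : ℝ^d →L[ℝ] ℝ^d) : Tgrp E 1 = 1 := by
  rw [Tgrp, Real.log_one]
  exact (congrArg NormedSpace.exp (zero_smul ℝ E)).trans NormedSpace.exp_zero

theorem Tgrp_inv_apply (E : ℝ^d →L[ℝ] ℝ^d) (r : ℝ) (x : ℝ^d) : Tgrp E r⁻¹ (Tgrp E r x) = x := by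
  rw [Tgrp, Tgrp, ← mul_apply_eq_comp, ← NormedSpace.exp_add_smul, Real.log_inv, neg_add_cancel,
    zero_smul, NormedSpace.exp_zero, one_apply_eq_self]

theorem continuousOn_Tgrp (E : ℝ^d →L[ℝ] ℝ^d) : ContinuousOn (Tgrp E) (Ioi 0) := by
  let +nondep : NormedAlgebra ℚ (ℝ^d →L[ℝ] ℝ^d) := .restrictScalars ℚ ℝ _
  exact NormedSpace.exp_continuous.comp_continuousOn
    ((Real.continuousOn_log.mono fun _ hr => ne_of_gt hr).smul continuousOn_const)

theorem Tgrp_apply_of_apply_eq_smul {E : ℝ^d →L[ℝ] ℝ^d} {μ : ℝ} {v : ℝ^d} (hv : E v = μ • v)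
    {r : ℝ} (hr : 0 < r) : Tgrp E r v = r ^ μ • v := by
  rw [Tgrp, NormedSpace.exp_smul_apply_of_apply_eq_smul E _ hv, Real.rpow_def_of_pos hr]

theorem IsContracting.tendsto_apply {E : ℝ^d →L[ℝ] ℝ^d} (hE : IsContracting E) (x : ℝ^d) :
    Tendsto (fun r => Tgrp E r x) (𝓝[>] 0) (𝓝 0) := by
  refine squeeze_zero_norm (fun r => (Tgrp E r).le_opNorm x) ?_
  simpa using hE.mul_const ‖x‖

end Tgrp

namespace IsExpOf

variable {d : ℕ} {P : ℝ^d → ℝ} {E : ℝ^d →L[ℝ] ℝ^d}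

theorem eigenvalue_pos (hE : IsExpOf P E) (hc : Continuous P) (hnn : ∀ x, 0 ≤ P x)
    (hpd : ∀ x, P x = 0 → x = 0) {μ : ℝ} (hμ : Module.End.HasEigenvalue (E : ℝ^d →ₗ[ℝ] ℝ^d) μ) :
    0 < μ := by
  obtain ⟨v, hv, hv0⟩ := hμ.exists_hasEigenvector
  have hEv : E v = μ • v := Module.End.mem_eigenspace_iff.1 hv
  have hPv : 0 < P v := (hnn v).lt_of_ne' (mt (hpd v) hv0)
  by_contra! hμ0
  obtain ⟨B, hB⟩ := (isCompact_Icc (a := (0 : ℝ)) (b := 1)).bddAbove_image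
    (f := fun c => P (c • v)) (by fun_prop)
  set r := max 1 ((B + 1) / P v)
  have hr : 0 < r := one_pos.trans_le (le_max_left _ _)
  have hbound : r * P v ≤ B := by
    rw [← hE r hr v, Tgrp_apply_of_apply_eq_smul hEv hr]
    exact hB ⟨_, ⟨Real.rpow_nonneg hr.le _,
      Real.rpow_le_one_of_one_le_of_nonpos (le_max_left _ _) hμ0⟩, rfl⟩
  have hlarge : B + 1 ≤ r * P v := (div_le_iff₀ hPv).1 (le_max_right _ _)
  linarith

theorem tendsto_exp_neg_smul_apply (hE : IsExpOf P E) (hc : Continuous P)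
    (hnn : ∀ x, 0 ≤ P x) (hpd : ∀ x, P x = 0 → x = 0)
    (hspec : (LinearMap.charpoly (E : ℝ^d →ₗ[ℝ] ℝ^d)).Splits) (x : ℝ^d) :
    Tendsto (fun t : ℝ => NormedSpace.exp ((-t) • E) x) atTop (𝓝 0) := by
  have hx : x ∈ ⨆ μ, Module.End.maxGenEigenspace (E : ℝ^d →ₗ[ℝ] ℝ^d) μ := by
    rw [Module.End.iSup_maxGenEigenspace_eq_top_of_splits _ hspec]
    exact Submodule.mem_top
  refine Submodule.iSup_induction _ (motive := fun x =>
    Tendsto (fun t : ℝ => NormedSpace.exp ((-t) • E) x) atTop (𝓝 0)) hx ?_ (by simp)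
    (fun y z hy hz => by simpa using hy.add hz)
  intro μ y hy
  rcases eq_or_ne y 0 with rfl | hy0
  · simp
  obtain ⟨k, hk⟩ := (Module.End.mem_maxGenEigenspace _ μ y).1 hy
  refine NormedSpace.tendsto_exp_neg_smul_apply_of_pow_sub_smul_apply_eq_zero E
    (hE.eigenvalue_pos hc hnn hpd (Module.End.hasEigenvalue_of_mem_maxGenEigenspace hy hy0))
    (m := k) ?_
  rwa [← ContinuousLinearMap.coe_coe, ContinuousLinearMap.toLinearMap_pow,
    ContinuousLinearMap.toLinearMap_sub, ContinuousLinearMap.toLinearMap_smul,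
    ContinuousLinearMap.toLinearMap_one]

theorem isContracting (hE : IsExpOf P E) (hc : Continuous P) (hnn : ∀ x, 0 ≤ P x)
    (hpd : ∀ x, P x = 0 → x = 0) (hspec : (LinearMap.charpoly (E : ℝ^d →ₗ[ℝ] ℝ^d)).Splits) :
    IsContracting E := by
  have hexp : Tendsto (fun t : ℝ => NormedSpace.exp ((-t) • E)) atTop (𝓝 0) :=
    ContinuousLinearMap.tendsto_of_tendsto_apply fun x => by
      simpa using hE.tendsto_exp_neg_smul_apply hc hnn hpd hspec x
  have hlog : Tendsto (fun r : ℝ => -Real.log r) (𝓝[>] 0) atTop :=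
    tendsto_neg_atBot_atTop.comp Real.tendsto_log_nhdsGT_zero
  simpa [IsContracting, Tgrp, Function.comp_def] using (hexp.comp hlog).norm

theorem norm_le_one_of_lt (hE : IsExpOf P E) (hnn : ∀ x, 0 ≤ P x) (hcon : IsContracting E)
    {m : ℝ} (hm : ∀ y ∈ Metric.sphere 0 1, m ≤ P y) {x : ℝ^d} (hx : P x < m) : ‖x‖ ≤ 1 := by
  by_contra! hx1
  obtain ⟨s, hs1, hs⟩ := ((tendsto_norm_zero.comp (hcon.tendsto_apply x)).eventually
    (gt_mem_nhds one_pos)).and (Ioo_mem_nhdsGT one_pos) |>.exists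
  have hcont : ContinuousOn (fun r => ‖Tgrp E r x‖) (Icc s 1) :=
    ((continuousOn_Tgrp E).mono fun r hr => hs.1.trans_le hr.1).clm_apply continuousOn_const
      |>.norm
  obtain ⟨s₀, hs₀, hs₀x⟩ := intermediate_value_Icc hs.2.le hcont
    ⟨hs1.le, by rw [Tgrp_one, one_apply_eq_self]; exact hx1.le⟩
  have hs₀pos : 0 < s₀ := hs.1.trans_le hs₀.1
  have := hm _ (mem_sphere_zero_iff_norm.2 hs₀x)
  rw [hE s₀ hs₀pos] at this
  nlinarith [hnn x, hs₀.2]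

theorem exists_norm_le_of_lt (hE : IsExpOf P E) (hc : Continuous P) (hnn : ∀ x, 0 ≤ P x)
    (hpd : ∀ x, P x = 0 → x = 0) (hcon : IsContracting E) (N : ℝ) :
    ∃ R, ∀ x, P x < N → ‖x‖ ≤ R := by
  obtain ⟨m, hm0, hm⟩ := (isCompact_sphere (0 : ℝ^d) 1).exists_forall_le' hc.continuousOn
    (a := 0) fun y hy =>
      (hnn y).lt_of_ne' (mt (hpd y) (ne_zero_of_mem_sphere one_ne_zero ⟨y, hy⟩))
  -- `T_r` with `r = m / max N m` maps `{P < N}` into `{P < m}`, which lies in the unit ball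
  set r := m / max N m
  have hr : 0 < r := div_pos hm0 (hm0.trans_le (le_max_right _ _))
  refine ⟨‖Tgrp E r⁻¹‖, fun x hx => ?_⟩
  have hrx : P (Tgrp E r x) < m := by
    rw [hE r hr]
    calc r * P x < r * max N m := mul_lt_mul_of_pos_left (hx.trans_le (le_max_left _ _)) hr
      _ = m := div_mul_cancel₀ _ (hm0.trans_le (le_max_right _ _)).ne'
  calc ‖x‖ = ‖Tgrp E r⁻¹ (Tgrp E r x)‖ := by rw [Tgrp_inv_apply]
    _ ≤ ‖Tgrp E r⁻¹‖ * ‖Tgrp E r x‖ := (Tgrp E r⁻¹).le_opNorm _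
    _ ≤ ‖Tgrp E r⁻¹‖ * 1 := by gcongr; exact hE.norm_le_one_of_lt hnn hcon hm hrx
    _ = ‖Tgrp E r⁻¹‖ := mul_one _

theorem tendsto_cocompact_atTop (hE : IsExpOf P E) (hc : Continuous P) (hnn : ∀ x, 0 ≤ P x)
    (hpd : ∀ x, P x = 0 → x = 0) (hcon : IsContracting E) :
    Tendsto P (cocompact (ℝ^d)) atTop := by
  refine tendsto_atTop.2 fun N => ?_
  obtain ⟨R, hR⟩ := hE.exists_norm_le_of_lt hc hnn hpd hcon N
  filter_upwards [tendsto_norm_cocompact_atTop.eventually_gt_atTop R] with x hx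
  exact le_of_not_gt fun h => (hR x h).not_gt hx

end IsExpOf

/-- If `P` is continuous, positive definite, and some exponent `E` of `P` has purely real
spectrum (its characteristic polynomial splits over `ℝ`), then `{r^E}` is contracting and
hence `P` is positive homogeneous. -/
theorem real_spectrum_exponent_contracting {d : ℕ}
    (P : EuclideanSpace ℝ (Fin d) → ℝ)
    (hc : Continuous P) (hnn : ∀ x, 0 ≤ P x) (hpd : ∀ x, P x = 0 → x = 0)
    (E : EuclideanSpace ℝ (Fin d) →L[ℝ] EuclideanSpace ℝ (Fin d))
    (hE : IsExpOf P E)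
    (hspec : (LinearMap.charpoly
      (E : EuclideanSpace ℝ (Fin d) →ₗ[ℝ] EuclideanSpace ℝ (Fin d))).Splits) :
    IsContracting E ∧ IsPosHom P := by
  have hcon := hE.isContracting hc hnn hpd hspec
  exact ⟨hcon, hc, hnn, hpd, ⟨E, hE⟩, hE.tendsto_cocompact_atTop hc hnn hpd hcon⟩
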